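/- arXiv:0904.2970 — 2 statements merged into one kernel-verified Lean document; each statement's English description precedes it below -/
import Mathlib

section
/- Let X be a real Banach space that is an M-ideal in its bidual, i.e., with ι_X : X → X** and ι_{X*} : X* → X*** the canonical isometric embeddings and, for F ∈ X***, πF := ι_{X*}(F ∘ ι_X), one has ‖F‖ = ‖πF‖ + ‖F − πF‖ for every F ∈ X***. Let X⁗ := (X***)* be the fourth dual, j : X → X⁗ the composition of the canonical embeddings X → X** → X⁗, and let u ∈ X⁗ satisfy ‖u‖ = 1 and u(ι_{X*}(x*)) = 0 for every x* ∈ X*. Then ‖j(x) + a·u‖ = max(‖x‖, |a|) for every x ∈ X and every scalar a ∈ ℝ. -/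
/-!
The map `π F = ι_{X*} (F ∘ ι_X)` is an L-projection on `X***`: `‖F‖ = ‖π F‖ + ‖F - π F‖`. Dually,
for functionals `φ` vanishing on `ker π` and `ψ` vanishing on `range π`, evaluating at `F` gives
`(φ + ψ) F = φ (π F) + ψ (F - π F)`, whence `‖φ + ψ‖ = max ‖φ‖ ‖ψ‖`. In `X⁗ = (X***)*` the
functional `j x` vanishes on `ker π` and `a • u` on `range π`, and `j` is an isometry.
-/

/-- The topological dual of a seminormed space, as `NormedSpace.Dual` was defined in the older
Mathlib (it has since been replaced by `StrongDual`, which takes only topological arguments). -/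
abbrev NormedSpace.Dual (𝕜 : Type*) [NontriviallyNormedField 𝕜] (E : Type*)
    [SeminormedAddCommGroup E] [NormedSpace 𝕜 E] : Type _ :=
  E →L[𝕜] 𝕜

open NormedSpace

theorem norm_add_eq_max_of_vanishing_on_lSummands {𝕜 E : Type*} [NontriviallyNormedField 𝕜]
    [SeminormedAddCommGroup E] [NormedSpace 𝕜 E] (P : E → E)
    (hP : ∀ F, ‖F‖ = ‖P F‖ + ‖F - P F‖) (φ ψ : Dual 𝕜 E)
    (hφ : ∀ F, φ (F - P F) = 0) (hψ : ∀ F, ψ (P F) = 0) :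
    ‖φ + ψ‖ = max ‖φ‖ ‖ψ‖ := by
  have hφP : ∀ F, φ (P F) = φ F := fun F => by
    rw [eq_comm, ← sub_eq_zero, ← map_sub, hφ]
  have hψP : ∀ F, ψ (F - P F) = ψ F := fun F => by
    rw [map_sub, hψ, sub_zero]
  apply le_antisymm
  · refine (φ + ψ).opNorm_le_bound (le_max_of_le_left (norm_nonneg φ)) fun F => ?_
    calc ‖(φ + ψ) F‖ = ‖φ (P F) + ψ (F - P F)‖ := by
          rw [hφP, hψP, add_apply]
      _ ≤ ‖φ‖ * ‖P F‖ + ‖ψ‖ * ‖F - P F‖ :=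
          (norm_add_le _ _).trans (add_le_add (φ.le_opNorm _) (ψ.le_opNorm _))
      _ ≤ max ‖φ‖ ‖ψ‖ * ‖P F‖ + max ‖φ‖ ‖ψ‖ * ‖F - P F‖ := by
          gcongr
          exacts [le_max_left _ _, le_max_right _ _]
      _ = max ‖φ‖ ‖ψ‖ * ‖F‖ := by rw [hP F, mul_add]
  · refine max_le (φ.opNorm_le_bound (norm_nonneg _) fun F => ?_)
      (ψ.opNorm_le_bound (norm_nonneg _) fun F => ?_)
    · calc ‖φ F‖ = ‖(φ + ψ) (P F)‖ := by
            rw [add_apply, hφP, hψ, add_zero]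
        _ ≤ ‖φ + ψ‖ * ‖P F‖ := (φ + ψ).le_opNorm _
        _ ≤ ‖φ + ψ‖ * ‖F‖ := by
            gcongr
            exact (hP F).symm ▸ le_add_of_nonneg_right (norm_nonneg _)
    · calc ‖ψ F‖ = ‖(φ + ψ) (F - P F)‖ := by
            rw [add_apply, hψP, hφ, zero_add]
        _ ≤ ‖φ + ψ‖ * ‖F - P F‖ := (φ + ψ).le_opNorm _
        _ ≤ ‖φ + ψ‖ * ‖F‖ := by
            gcongr
            exact (hP F).symm ▸ le_add_of_nonneg_left (norm_nonneg _)

theorem norm_add_smul_of_mIdeal_perp_general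
    (X : Type) [NormedAddCommGroup X] [NormedSpace ℝ X]
    -- `X` is an M-ideal in its bidual:
    (hM : ∀ F : Dual ℝ (Dual ℝ (Dual ℝ X)),
      ‖F‖ = ‖inclusionInDoubleDual ℝ (Dual ℝ X) (F.comp (inclusionInDoubleDual ℝ X))‖ +
        ‖F - inclusionInDoubleDual ℝ (Dual ℝ X) (F.comp (inclusionInDoubleDual ℝ X))‖)
    -- `j : X → X⁗` is the composition of the canonical embeddings `X → X** → X⁗`:
    (j : X →L[ℝ] Dual ℝ (Dual ℝ (Dual ℝ (Dual ℝ X))))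
    (hj : j = (inclusionInDoubleDual ℝ (Dual ℝ (Dual ℝ X))).comp (inclusionInDoubleDual ℝ X))
    (u : Dual ℝ (Dual ℝ (Dual ℝ (Dual ℝ X))))
    (hu_norm : ‖u‖ = 1)
    (hu_perp : ∀ xstar : Dual ℝ X, u (inclusionInDoubleDual ℝ (Dual ℝ X) xstar) = 0) :
    ∀ (x : X) (a : ℝ), ‖j x + a • u‖ = max ‖x‖ |a| := by
  intro x a
  have hj_perp : ∀ F : Dual ℝ (Dual ℝ (Dual ℝ X)),
      j x (F - inclusionInDoubleDual ℝ (Dual ℝ X) (F.comp (inclusionInDoubleDual ℝ X))) = 0 := by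
    intro F
    simp [hj]
  have hj_norm : ‖j x‖ = ‖x‖ := by
    rw [hj]
    exact ((inclusionInDoubleDualLi ℝ).norm_map _).trans ((inclusionInDoubleDualLi ℝ).norm_map x)
  rw [norm_add_eq_max_of_vanishing_on_lSummands _ hM _ _ hj_perp fun F => by simp [hu_perp],
    hj_norm, norm_smul, hu_norm, mul_one, Real.norm_eq_abs]

theorem norm_add_smul_of_mIdeal_perp
    (X : Type) [NormedAddCommGroup X] [NormedSpace ℝ X] [CompleteSpace X]
    -- `X` is an M-ideal in its bidual:
    (hM : ∀ F : Dual ℝ (Dual ℝ (Dual ℝ X)),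
      ‖F‖ = ‖inclusionInDoubleDual ℝ (Dual ℝ X) (F.comp (inclusionInDoubleDual ℝ X))‖ +
        ‖F - inclusionInDoubleDual ℝ (Dual ℝ X) (F.comp (inclusionInDoubleDual ℝ X))‖)
    -- `j : X → X⁗` is the composition of the canonical embeddings `X → X** → X⁗`:
    (j : X →L[ℝ] Dual ℝ (Dual ℝ (Dual ℝ (Dual ℝ X))))
    (hj : j = (inclusionInDoubleDual ℝ (Dual ℝ (Dual ℝ X))).comp (inclusionInDoubleDual ℝ X))
    (u : Dual ℝ (Dual ℝ (Dual ℝ (Dual ℝ X))))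
    (hu_norm : ‖u‖ = 1)
    (hu_perp : ∀ xstar : Dual ℝ X, u (inclusionInDoubleDual ℝ (Dual ℝ X) xstar) = 0) :
    ∀ (x : X) (a : ℝ), ‖j x + a • u‖ = max ‖x‖ |a| :=
  norm_add_smul_of_mIdeal_perp_general X hM j hj u hu_norm hu_perp
end

section
/- Let (Ω, P) be a probability space and Ψ : [0, ∞) → [0, ∞) a non-decreasing continuous convex function with Ψ(0) = 0. Let (g_n)_{n≥1} be a sequence of measurable real- (or complex-) valued functions on Ω such that ∫_Ω Ψ(|g_n|) dP ≤ 1 for every n. Then there exist a sequence (f_n)_{n≥1} of essentially bounded measurable functions on Ω and a measurable function g : Ω → [0, ∞) with ∫_Ω Ψ(g) dP ≤ 1, such that |g_n − f_n| ≤ g almost everywhere, for every n ≥ 1. -/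
/-!
Choose levels `M n` such that both `P {M n < |g n|}` and `∫_{M n < |g n|} Ψ(|g n|) dP` are at most
`ε n`, where `∑ ε n ≤ 1`, and cut `g n` off at `M n`; what is removed is dominated by the tail
`h n = 1_{M n < |g n|} |g n|`. By Borel–Cantelli almost every `ω` lies in only finitely many of
the sets `{M n < |g n|}`, so `G = ⨆ n, h n` is attained at some `n` almost everywhere. Hence
`Ψ(G) ≤ ∑ Ψ(h n)` a.e., and `∫ Ψ(G) dP ≤ ∑ ε n ≤ 1`.
-/

open MeasureTheory Set Filter Topology ENNReal Function

theorem ContinuousOn.measurable_comp {Ω X Y : Type*} [MeasurableSpace Ω] [TopologicalSpace X]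
    [MeasurableSpace X] [OpensMeasurableSpace X] [TopologicalSpace Y] [MeasurableSpace Y]
    [BorelSpace Y] {Ψ : X → Y} {s : Set X} (hΨ : ContinuousOn Ψ s) {u : Ω → X}
    (hu : Measurable u) (hus : ∀ ω, u ω ∈ s) : Measurable fun ω => Ψ (u ω) :=
  hΨ.domRestrict.measurable.comp (hu.subtype_mk (h := hus))

theorem Set.finite_range_of_eventually_eq {α : Type*} {a : ℕ → α} {c : α}
    (h : ∀ᶠ n in atTop, a n = c) : (range a).Finite := by
  obtain ⟨N, hN⟩ := eventually_atTop.1 h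
  refine (((finite_lt_nat N).image a).insert c).subset ?_
  rintro _ ⟨n, rfl⟩
  rcases lt_or_ge n N with hn | hn
  · exact mem_insert_of_mem _ ⟨n, hn, rfl⟩
  · simp [hN n hn]

section Truncation

variable {α : Type*} (u : α → ℝ) (M : ℝ) (x : α)

theorem abs_indicator_setOf_abs_le_le : |{x | |u x| ≤ M}.indicator u x| ≤ |M| := by
  by_cases hx : |u x| ≤ M
  · simpa [hx] using hx.trans (le_abs_self M)
  · simp [hx]

theorem abs_sub_indicator_setOf_abs_le :
    |u x - {x | |u x| ≤ M}.indicator u x| = {x | M < |u x|}.indicator (fun x => |u x|) x := by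
  by_cases hx : |u x| ≤ M
  · simp [hx, not_lt.2 hx]
  · simp [hx, not_le.1 hx]

end Truncation

section Measure

variable {Ω : Type*} [MeasurableSpace Ω] {μ : Measure Ω}

theorem tendsto_measure_setOf_lt_atTop [IsFiniteMeasure μ] {u : Ω → ℝ} (hu : Measurable u) :
    Tendsto (fun M : ℝ => μ {ω | M < u ω}) atTop (𝓝 0) := by
  have hempty : ⋂ M : ℝ, {ω | M < u ω} = ∅ :=
    eq_empty_of_forall_notMem fun ω hω => lt_irrefl (u ω) (mem_iInter.1 hω (u ω))
  have := tendsto_measure_iInter_atTop (μ := μ)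
    (fun M => (measurableSet_lt measurable_const hu).nullMeasurableSet)
    (fun M M' hMM' ω (hω : M' < u ω) => hMM'.trans_lt hω) ⟨0, measure_ne_top μ _⟩
  rwa [hempty, measure_empty] at this

theorem exists_measure_setOf_lt_le_and_setLIntegral_le [IsFiniteMeasure μ] {u : Ω → ℝ}
    (hu : Measurable u) {φ : Ω → ℝ≥0∞} (hφ : ∫⁻ ω, φ ω ∂μ ≠ ∞) {ε : ℝ≥0∞} (hε : 0 < ε) :
    ∃ M : ℝ, μ {ω | M < u ω} ≤ ε ∧ ∫⁻ ω in {ω | M < u ω}, φ ω ∂μ ≤ ε := by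
  have := isFiniteMeasure_withDensity hφ
  obtain ⟨M, hM⟩ := ((tendsto_measure_setOf_lt_atTop (μ := μ + μ.withDensity φ) hu).eventually
    (gt_mem_nhds hε)).exists
  rw [Measure.add_apply, withDensity_apply _ (measurableSet_lt measurable_const hu)] at hM
  exact ⟨M, le_self_add.trans hM.le, le_add_self.trans hM.le⟩

section SupremumOfTails

variable {β : Type*} [Zero β] {h : ℕ → Ω → β}

theorem ae_finite_range_of_tsum_measure_support_ne_top (hfin : ∑' n, μ (support (h n)) ≠ ∞) :
    ∀ᵐ ω ∂μ, (range fun n => h n ω).Finite := by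
  filter_upwards [ae_eventually_notMem hfin] with ω hω
  exact finite_range_of_eventually_eq (hω.mono fun n => notMem_support.1)

variable [ConditionallyCompleteLinearOrder β]

theorem ae_le_iSup_of_tsum_measure_support_ne_top (hfin : ∑' n, μ (support (h n)) ≠ ∞) (n : ℕ) :
    ∀ᵐ ω ∂μ, h n ω ≤ ⨆ m, h m ω := by
  filter_upwards [ae_finite_range_of_tsum_measure_support_ne_top hfin] with ω hω
  exact le_ciSup hω.bddAbove n

theorem lintegral_comp_iSup_le_tsum (hfin : ∑' n, μ (support (h n)) ≠ ∞) {Φ : β → ℝ≥0∞}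
    (hΦh : ∀ n, Measurable fun ω => Φ (h n ω)) :
    ∫⁻ ω, Φ (⨆ n, h n ω) ∂μ ≤ ∑' n, ∫⁻ ω, Φ (h n ω) ∂μ := by
  rw [← lintegral_tsum fun n => (hΦh n).aemeasurable]
  refine lintegral_mono_ae ?_
  filter_upwards [ae_finite_range_of_tsum_measure_support_ne_top hfin] with ω hω
  obtain ⟨n, hn⟩ := (range_nonempty _).csSup_mem hω
  rw [iSup, ← hn]
  exact ENNReal.le_tsum n

end SupremumOfTails

end Measure

theorem exists_bounded_and_dominating_of_orlicz_ball_general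
    {Ω : Type*} [MeasurableSpace Ω] (P : Measure Ω) [IsProbabilityMeasure P]
    (Ψ : ℝ → ℝ)
    (hΨ_cont : ContinuousOn Ψ (Set.Ici 0))
    (hΨ_zero : Ψ 0 = 0)
    (g : ℕ → Ω → ℝ) (hg_meas : ∀ n, Measurable (g n))
    (hg : ∀ n, ∫⁻ ω, ENNReal.ofReal (Ψ |g n ω|) ∂P ≤ 1) :
    ∃ (f : ℕ → Ω → ℝ) (G : Ω → ℝ),
      (∀ n, Measurable (f n)) ∧
      (∀ n, ∃ M : ℝ, ∀ᵐ ω ∂P, |f n ω| ≤ M) ∧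
      Measurable G ∧ (∀ ω, 0 ≤ G ω) ∧
      (∫⁻ ω, ENNReal.ofReal (Ψ (G ω)) ∂P ≤ 1) ∧
      (∀ n, ∀ᵐ ω ∂P, |g n ω - f n ω| ≤ G ω) := by
  obtain ⟨ε, hε_pos, hε_sum⟩ := ENNReal.exists_pos_sum_of_countable' one_ne_zero ℕ
  choose M hM_meas hM_int using fun n => exists_measure_setOf_lt_le_and_setLIntegral_le
    (hg_meas n).abs (ne_top_of_le_ne_top one_ne_top (hg n)) (hε_pos n)
  set A := fun n => {ω | M n < |g n ω|}
  have hA : ∀ n, MeasurableSet (A n) := fun n => measurableSet_lt measurable_const (hg_meas n).abs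
  set h := fun n => (A n).indicator fun ω => |g n ω|
  have h_meas : ∀ n, Measurable (h n) := fun n => (hg_meas n).abs.indicator (hA n)
  have h_nonneg : ∀ n ω, 0 ≤ h n ω := fun n => indicator_nonneg fun ω _ => abs_nonneg _
  have hfin : ∑' n, P (support (h n)) ≠ ∞ :=
    ((ENNReal.tsum_le_tsum fun n => (measure_mono support_indicator_subset).trans
      (hM_meas n)).trans_lt (hε_sum.trans one_lt_top)).ne
  have hΨh : ∀ n, ∫⁻ ω, ENNReal.ofReal (Ψ (h n ω)) ∂P =
      ∫⁻ ω in A n, ENNReal.ofReal (Ψ |g n ω|) ∂P := fun n => by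
    simp only [h, ← lintegral_indicator (hA n), indicator_apply, apply_ite, hΨ_zero,
      ENNReal.ofReal_zero]
  refine ⟨fun n => {ω | |g n ω| ≤ M n}.indicator (g n), fun ω => ⨆ n, h n ω,
    fun n => (hg_meas n).indicator (measurableSet_le (hg_meas n).abs measurable_const),
    fun n => ⟨|M n|, .of_forall (abs_indicator_setOf_abs_le_le (g n) (M n))⟩, .iSup h_meas,
    fun ω => Real.iSup_nonneg (h_nonneg · ω), ?_, fun n => ?_⟩
  · calc ∫⁻ ω, ENNReal.ofReal (Ψ (⨆ n, h n ω)) ∂P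
        ≤ ∑' n, ∫⁻ ω, ENNReal.ofReal (Ψ (h n ω)) ∂P :=
          lintegral_comp_iSup_le_tsum (Φ := fun x => ENNReal.ofReal (Ψ x)) hfin fun n =>
            (hΨ_cont.measurable_comp (h_meas n) (h_nonneg n)).ennreal_ofReal
      _ ≤ ∑' n, ε n := by simpa only [hΨh] using ENNReal.tsum_le_tsum hM_int
      _ ≤ 1 := hε_sum.le
  · simpa only [abs_sub_indicator_setOf_abs_le] using
      ae_le_iSup_of_tsum_measure_support_ne_top hfin n

/-- Given a sequence `(g n)` in the unit ball of the Orlicz space `L^Ψ(P)` over a probability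
space, there are essentially bounded functions `(f n)` and a nonnegative `G` in the unit ball
of `L^Ψ(P)` with `|g n - f n| ≤ G` a.e. for all `n`. -/
theorem exists_bounded_and_dominating_of_orlicz_ball
    {Ω : Type*} [MeasurableSpace Ω] (P : Measure Ω) [IsProbabilityMeasure P]
    (Ψ : ℝ → ℝ)
    (hΨ_mono : MonotoneOn Ψ (Set.Ici 0))
    (hΨ_cont : ContinuousOn Ψ (Set.Ici 0))
    (hΨ_convex : ConvexOn ℝ (Set.Ici 0) Ψ)
    (hΨ_zero : Ψ 0 = 0)
    (hΨ_nonneg : ∀ x : ℝ, 0 ≤ x → 0 ≤ Ψ x)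
    (g : ℕ → Ω → ℝ) (hg_meas : ∀ n, Measurable (g n))
    (hg : ∀ n, ∫⁻ ω, ENNReal.ofReal (Ψ |g n ω|) ∂P ≤ 1) :
    ∃ (f : ℕ → Ω → ℝ) (G : Ω → ℝ),
      (∀ n, Measurable (f n)) ∧
      (∀ n, ∃ M : ℝ, ∀ᵐ ω ∂P, |f n ω| ≤ M) ∧
      Measurable G ∧ (∀ ω, 0 ≤ G ω) ∧
      (∫⁻ ω, ENNReal.ofReal (Ψ (G ω)) ∂P ≤ 1) ∧
      (∀ n, ∀ᵐ ω ∂P, |g n ω - f n ω| ≤ G ω) :=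
  exists_bounded_and_dominating_of_orlicz_ball_general P Ψ hΨ_cont hΨ_zero g hg_meas hg
end
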